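/- arXiv:2304.03049 — 2 statements merged into one kernel-verified Lean document; each statement's English description precedes it below -/
import Mathlib

section
/- Let p_1, …, p_k be distinct primes and d a squarefree positive integer with gcd(d, p_1⋯p_k) = 1 and gcd(d·p_1⋯p_k, a) = 1. Set α_0 = 1 and α_m = p_1⋯p_m for 1 ≤ m ≤ k. Then ρ_{d·p_1⋯p_k} = (−1)^k·(ρ_d − (μ(d)h(d)/(H_a(z)·g(d)))·R), where R = ∑_{m=1}^{k} (∏_{i=1}^{m−1} h(p_i)/g(p_i))·∑_{z/(dα_m) < l ≤ z/(dα_{m−1}), gcd(l, dα_m a) = 1} μ(l)²h(l). -/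
open Finset

/-- `P_a(z) = ∏_{p ≤ z, p ∤ a} p`, the product over primes up to `z` not dividing `a`. -/
noncomputable def Pa (z : ℝ) (a : ℕ) : ℕ :=
  ∏ p ∈ (Finset.range (⌊z⌋₊ + 1)).filter (fun p => p.Prime ∧ ¬p ∣ a), p

/-- `H_a(z) = ∑_{k ≤ z, (k,a)=1} μ(k)² h(k)`. -/
noncomputable def Ha (z : ℝ) (a : ℕ) (h : ℕ → ℝ) : ℝ :=
  ∑ k ∈ (Finset.Icc 1 ⌊z⌋₊).filter (fun k => Nat.gcd k a = 1),
    (ArithmeticFunction.moebius k : ℝ) ^ 2 * h k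

/-- The Selberg sieve coefficients
`ρ_d = (μ(d)h(d)/(H_a(z) g(d))) ∑_{k ≤ z/d, kd | P_a(z)} μ(k)² h(k)`. -/
noncomputable def rhoCoeff (z : ℝ) (a : ℕ) (g h : ℕ → ℝ) (d : ℕ) : ℝ :=
  ((ArithmeticFunction.moebius d : ℝ) * h d / (Ha z a h * g d)) *
    ∑ k ∈ (Finset.Icc 1 ⌊z / (d : ℝ)⌋₊).filter (fun k => k * d ∣ Pa z a),
      (ArithmeticFunction.moebius k : ℝ) ^ 2 * h k

/-!
Write `ρ_e = c_e U(e)` with `c_e = μ(e)h(e)/(H_a(z)g(e))`. For squarefree `e` coprime to `a`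
and `k ≤ z/e`, the condition `ke ∣ P_a(z)` only says that `ke` is squarefree and coprime to
`a`, so `U(e) = ∑_{k ≤ z/e, (k, ea) = 1} μ(k)²h(k)`. Splitting this sum according to whether a
prime `q ∤ ea` divides `k` gives
`U(e) = (h(q) + 1) U(eq) + ∑_{z/(eq) < l ≤ z/e, (l, eqa) = 1} μ(l)²h(l)`,
and `h(q) + 1 = h(q)/g(q)`. Iterating over `q = p_1, …, p_k` expresses `U(d)` through `U(dα_k)`,
while multiplicativity gives `c_{dα_k} = (-1)^k c_d ∏ h(p_i)/g(p_i)`.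
-/

open ArithmeticFunction
open scoped ArithmeticFunction.Moebius

open scoped Function in
theorem map_prod_of_pairwise_coprime {M : Type*} [CommMonoid M] {f : ℕ → M} (h1 : f 1 = 1)
    (hmul : ∀ m n : ℕ, m.Coprime n → f (m * n) = f m * f n) {ι : Type*} (s : Finset ι)
    (u : ι → ℕ) (hs : (s : Set ι).Pairwise (Nat.Coprime on u)) :
    f (∏ i ∈ s, u i) = ∏ i ∈ s, f (u i) := by
  classical
  induction s using Finset.induction_on with
  | empty => simpa using h1
  | insert i s hi ih =>
    rw [coe_insert, Set.pairwise_insert_of_symm] at hs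
    rw [prod_insert hi, prod_insert hi, hmul, ih hs.1]
    exact Nat.Coprime.prod_right fun j hj => hs.2 j hj (ne_of_mem_of_not_mem hj hi).symm

open scoped Function in
theorem pairwise_coprime_of_injOn_primes {ι : Type*} {s : Set ι} {u : ι → ℕ}
    (hu : ∀ i ∈ s, (u i).Prime) (hinj : s.InjOn u) : s.Pairwise (Nat.Coprime on u) :=
  fun i hi j hj hij => (Nat.coprime_primes (hu i hi) (hu j hj)).mpr fun h => hij (hinj hi hj h)

theorem squarefree_prod_of_injOn_primes {ι : Type*} {s : Finset ι} {u : ι → ℕ}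
    (hu : ∀ i ∈ s, (u i).Prime) (hinj : Set.InjOn u s) : Squarefree (∏ i ∈ s, u i) :=
  Finset.squarefree_prod_of_pairwise_isCoprime
    (fun _ hi _ hj hij => Nat.coprime_iff_isRelPrime.mp
      (pairwise_coprime_of_injOn_primes hu hinj hi hj hij))
    fun i hi => (hu i hi).prime.squarefree

theorem moebius_mul_prod_of_injOn_primes {ι : Type*} {s : Finset ι} {u : ι → ℕ}
    (hu : ∀ i ∈ s, (u i).Prime) (hinj : Set.InjOn u s) {d : ℕ}
    (hd : d.Coprime (∏ i ∈ s, u i)) : μ (d * ∏ i ∈ s, u i) = μ d * (-1) ^ #s := by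
  rw [isMultiplicative_moebius.map_mul_of_coprime hd,
    isMultiplicative_moebius.map_prod u s (pairwise_coprime_of_injOn_primes hu hinj),
    prod_congr rfl fun i hi => moebius_apply_prime (hu i hi), prod_const]

open scoped Function in
theorem coprime_mul_prod_range_mul_of_lt {p : ℕ → ℕ} {k d a m : ℕ}
    (hp : ((range k : Finset ℕ) : Set ℕ).Pairwise (Nat.Coprime on p))
    (hd : d.Coprime (∏ i ∈ range k, p i)) (ha : (d * ∏ i ∈ range k, p i).Coprime a)
    (hm : m < k) : (p m).Coprime (d * (∏ i ∈ range m, p i) * a) := by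
  have hdvd : p m ∣ ∏ i ∈ range k, p i := dvd_prod_of_mem p (mem_range.mpr hm)
  refine Nat.Coprime.mul_right (Nat.Coprime.mul_right (hd.coprime_dvd_right hdvd).symm ?_)
    (ha.coprime_dvd_left (dvd_mul_of_dvd_right hdvd d))
  exact Nat.Coprime.prod_right fun i hi => hp (mem_range.mpr hm)
    (mem_range.mpr ((mem_range.mp hi).trans hm)) (mem_range.mp hi).ne'

theorem eq_prod_mul_add_sum_of_eq_mul_add {R : Type*} [CommSemiring R] {u r t : ℕ → R}
    {k : ℕ} (hu : ∀ m < k, u m = r m * u (m + 1) + t m) :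
    u 0 = (∏ i ∈ range k, r i) * u k + ∑ m ∈ range k, (∏ i ∈ range m, r i) * t m := by
  induction k with
  | zero => simp
  | succ n ih =>
    rw [ih fun m hm => hu m (hm.trans n.lt_succ_self), hu n n.lt_succ_self, prod_range_succ,
      sum_range_succ]
    ring

theorem sum_Icc_one_eq_sum_range {M : Type*} [AddCommMonoid M] (f : ℕ → M) (k : ℕ) :
    ∑ m ∈ Icc 1 k, f m = ∑ m ∈ range k, f (m + 1) := by
  rw [range_eq_Ico, sum_Ico_add', zero_add, Ico_add_one_right_eq_Icc]

theorem add_one_eq_div_of_eq_div_one_sub {x y : ℝ} (hx0 : x ≠ 0) (hx1 : x ≠ 1)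
    (hy : y = x / (1 - x)) : y + 1 = y / x := by
  have : 1 - x ≠ 0 := sub_ne_zero.mpr hx1.symm
  rw [hy]
  field_simp
  ring

theorem Ioc_zero_filter_dvd_eq_map {q : ℕ} (hq : 0 < q) (M : ℕ) :
    {k ∈ Ioc 0 M | q ∣ k} = (Ioc 0 (M / q)).map ⟨(q * ·), mul_right_injective₀ hq.ne'⟩ := by
  ext k
  simp only [mem_filter, mem_Ioc, mem_map, Function.Embedding.coeFn_mk]
  constructor
  · rintro ⟨⟨hk0, hkM⟩, l, rfl⟩
    refine ⟨l, ⟨Nat.pos_of_mul_pos_left hk0, ?_⟩, rfl⟩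
    exact (Nat.le_div_iff_mul_le hq).mpr (by linarith)
  · rintro ⟨l, ⟨hl0, hlM⟩, rfl⟩
    exact ⟨⟨Nat.mul_pos hq hl0, by nlinarith [Nat.div_mul_le_self M q]⟩, dvd_mul_right q l⟩

theorem squarefree_Pa (z : ℝ) (a : ℕ) : Squarefree (Pa z a) :=
  squarefree_prod_of_injOn_primes (fun _ hp => (mem_filter.mp hp).2.1) (Set.injOn_id _)

theorem dvd_Pa_iff {z : ℝ} {a n : ℕ} (hn0 : 0 < n) (hnz : n ≤ ⌊z⌋₊) :
    n ∣ Pa z a ↔ Squarefree n ∧ n.Coprime a := by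
  have hmem : ∀ {q : ℕ}, q.Prime → q ∣ n → (q ∈ {p ∈ range (⌊z⌋₊ + 1) | p.Prime ∧ ¬p ∣ a}
      ↔ ¬q ∣ a) := fun hq hqn => by
    simp [hq, Nat.lt_succ_iff.mpr ((Nat.le_of_dvd hn0 hqn).trans hnz)]
  constructor
  · intro hdvd
    refine ⟨(squarefree_Pa z a).squarefree_of_dvd hdvd, Nat.coprime_of_dvd fun q hq hqn => ?_⟩
    obtain ⟨r, hr, hqr⟩ := (Prime.dvd_finsetProd_iff hq.prime _).mp (hqn.trans hdvd)
    rw [(Nat.prime_dvd_prime_iff_eq hq (mem_filter.mp hr).2.1).mp hqr] at hqn ⊢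
    exact (hmem (mem_filter.mp hr).2.1 hqn).mp hr
  · rintro ⟨hsq, hcop⟩
    rw [← Nat.prod_primeFactors_of_squarefree hsq]
    refine prod_dvd_prod_of_subset _ _ _ fun q hq => ?_
    obtain ⟨hqp, hqn, -⟩ := Nat.mem_primeFactors.mp hq
    exact (hmem hqp hqn).mpr fun hqa =>
      hqp.one_lt.ne' (Nat.eq_one_of_dvd_coprimes hcop hqn hqa)

/-- `muSqSum h (Ioc 0 (⌊z⌋₊ / e)) (e * a)` is the sum `U(e)` above. -/
noncomputable def muSqSum (h : ℕ → ℝ) (s : Finset ℕ) (c : ℕ) : ℝ :=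
  ∑ k ∈ s with k.Coprime c, (μ k : ℝ) ^ 2 * h k

section MuSqSum

variable {h : ℕ → ℝ} {q c : ℕ}

theorem moebius_sq_mul_prime (hmul : ∀ m n : ℕ, m.Coprime n → h (m * n) = h m * h n)
    (hq : q.Prime) (l : ℕ) :
    (μ (q * l) : ℝ) ^ 2 * h (q * l) = if q ∣ l then 0 else h q * ((μ l : ℝ) ^ 2 * h l) := by
  split_ifs with hql
  · have : ¬Squarefree (q * l) := fun hsq =>
      hq.one_lt.ne' (Nat.isUnit_iff.mp (hsq q (mul_dvd_mul_left q hql)))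
    simp [moebius_eq_zero_of_not_squarefree this]
  · have hcop : q.Coprime l := (Nat.Prime.coprime_iff_not_dvd hq).mpr hql
    rw [isMultiplicative_moebius.map_mul_of_coprime hcop, hmul q l hcop,
      moebius_apply_prime hq]
    push_cast
    ring

theorem coprime_prime_iff_not_dvd (hq : q.Prime) {k : ℕ} : k.Coprime q ↔ ¬q ∣ k :=
  Nat.coprime_comm.trans hq.coprime_iff_not_dvd

theorem sum_coprime_and_dvd_eq_mul_muSqSum
    (hmul : ∀ m n : ℕ, m.Coprime n → h (m * n) = h m * h n) (hq : q.Prime) (hqc : q.Coprime c)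
    (M : ℕ) :
    ∑ k ∈ Ioc 0 M with k.Coprime c ∧ q ∣ k, (μ k : ℝ) ^ 2 * h k =
      h q * muSqSum h (Ioc 0 (M / q)) (q * c) := by
  rw [muSqSum, mul_sum, ← filter_filter, filter_comm, Ioc_zero_filter_dvd_eq_map hq.pos,
    filter_map, sum_map, sum_filter, sum_filter]
  refine sum_congr rfl fun l _ => ?_
  simp only [Function.comp_apply, Function.Embedding.coeFn_mk, Nat.coprime_mul_iff_left,
    Nat.coprime_mul_iff_right, and_iff_right hqc, moebius_sq_mul_prime hmul hq,
    coprime_prime_iff_not_dvd hq]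
  by_cases hql : q ∣ l <;> simp [hql]

theorem sum_coprime_and_not_dvd_eq_muSqSum_add (hq : q.Prime) (M : ℕ) :
    ∑ k ∈ Ioc 0 M with k.Coprime c ∧ ¬q ∣ k, (μ k : ℝ) ^ 2 * h k =
      muSqSum h (Ioc 0 (M / q)) (q * c) + muSqSum h (Ioc (M / q) M) (q * c) := by
  have hcop : ∀ k, (k.Coprime c ∧ ¬q ∣ k) ↔ k.Coprime (q * c) := fun k => by
    rw [Nat.coprime_mul_iff_right, coprime_prime_iff_not_dvd hq, and_comm]
  simp only [muSqSum, hcop, sum_filter]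
  exact (sum_Ioc_consecutive _ (Nat.zero_le _) (Nat.div_le_self M q)).symm

theorem muSqSum_Ioc_zero_eq_of_prime
    (hmul : ∀ m n : ℕ, m.Coprime n → h (m * n) = h m * h n) (hq : q.Prime) (hqc : q.Coprime c)
    (M : ℕ) :
    muSqSum h (Ioc 0 M) c =
      (h q + 1) * muSqSum h (Ioc 0 (M / q)) (q * c) + muSqSum h (Ioc (M / q) M) (q * c) := by
  rw [muSqSum, ← sum_filter_add_sum_filter_not _ (q ∣ ·), filter_filter, filter_filter,
    sum_coprime_and_dvd_eq_mul_muSqSum hmul hq hqc, sum_coprime_and_not_dvd_eq_muSqSum_add hq]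
  ring

theorem sum_filter_mul_dvd_Pa_eq_muSqSum (z : ℝ) {a e : ℕ} (he : Squarefree e)
    (hea : e.Coprime a) :
    ∑ k ∈ Icc 1 ⌊z / (e : ℝ)⌋₊ with k * e ∣ Pa z a, (μ k : ℝ) ^ 2 * h k =
      muSqSum h (Ioc 0 (⌊z⌋₊ / e)) (e * a) := by
  rw [Nat.floor_div_natCast, ← zero_add 1, Icc_add_one_left_eq_Ioc, muSqSum, sum_filter,
    sum_filter]
  refine sum_congr rfl fun k hk => ?_
  obtain ⟨hk0, hkN⟩ := mem_Ioc.mp hk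
  have he0 : 0 < e := he.ne_zero.bot_lt
  simp only [dvd_Pa_iff (Nat.mul_pos hk0 he0) ((Nat.le_div_iff_mul_le he0).mp hkN),
    Nat.squarefree_mul_iff, Nat.coprime_mul_iff_left, Nat.coprime_mul_iff_right]
  by_cases hsq : Squarefree k
  · simp [hsq, he, and_iff_left hea]
  · simp [hsq, moebius_eq_zero_of_not_squarefree]

theorem muSqSum_telescope {g : ℕ → ℝ}
    (hmul : ∀ m n : ℕ, m.Coprime n → h (m * n) = h m * h n) {p e : ℕ → ℕ} {k a : ℕ}
    (hp : ∀ i < k, (p i).Prime)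
    (hhg : ∀ i < k, h (p i) + 1 = h (p i) / g (p i)) (he : ∀ m < k, e (m + 1) = e m * p m)
    (hcop : ∀ m < k, (p m).Coprime (e m * a)) (N : ℕ) :
    muSqSum h (Ioc 0 (N / e 0)) (e 0 * a) =
      (∏ i ∈ range k, h (p i) / g (p i)) * muSqSum h (Ioc 0 (N / e k)) (e k * a) +
        ∑ m ∈ range k, (∏ i ∈ range m, h (p i) / g (p i)) *
          muSqSum h (Ioc (N / e (m + 1)) (N / e m)) (e (m + 1) * a) := by
  refine eq_prod_mul_add_sum_of_eq_mul_add
    (u := fun m => muSqSum h (Ioc 0 (N / e m)) (e m * a))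
    (t := fun m => muSqSum h (Ioc (N / e (m + 1)) (N / e m)) (e (m + 1) * a)) fun m hm => ?_
  rw [he m hm, ← Nat.div_div_eq_div_mul, mul_right_comm, mul_comm _ (p m), ← hhg m hm]
  exact muSqSum_Ioc_zero_eq_of_prime hmul (hp m hm) (hcop m hm) _

end MuSqSum

theorem rho_mul_primes_general (a : ℕ) (z : ℝ) (g h : ℕ → ℝ)
    (hg1 : g 1 = 1) (hgmul : ∀ m n : ℕ, Nat.Coprime m n → g (m * n) = g m * g n)
    (hgp : ∀ p : ℕ, p.Prime → 0 < g p ∧ g p < 1)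
    (hh1 : h 1 = 1) (hhmul : ∀ m n : ℕ, Nat.Coprime m n → h (m * n) = h m * h n)
    (hhp : ∀ p : ℕ, p.Prime → h p = g p / (1 - g p))
    (k : ℕ) (p : ℕ → ℕ) (hp : ∀ i < k, (p i).Prime)
    (hinj : ∀ i < k, ∀ j < k, p i = p j → i = j)
    (d : ℕ) (hd : Squarefree d)
    (hcop : Nat.Coprime d (∏ i ∈ Finset.range k, p i))
    (hcopa : Nat.Coprime (d * ∏ i ∈ Finset.range k, p i) a) :
    rhoCoeff z a g h (d * ∏ i ∈ Finset.range k, p i) =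
      (-1 : ℝ) ^ k *
        (rhoCoeff z a g h d -
          ((ArithmeticFunction.moebius d : ℝ) * h d / (Ha z a h * g d)) *
            ∑ m ∈ Finset.Icc 1 k,
              (∏ i ∈ Finset.range (m - 1), h (p i) / g (p i)) *
                ∑ l ∈ (Finset.Ioc ⌊z / ((d * ∏ i ∈ Finset.range m, p i : ℕ) : ℝ)⌋₊
                      ⌊z / ((d * ∏ i ∈ Finset.range (m - 1), p i : ℕ) : ℝ)⌋₊).filter
                    (fun l => Nat.gcd l (d * (∏ i ∈ Finset.range m, p i) * a) = 1),
                  (ArithmeticFunction.moebius l : ℝ) ^ 2 * h l) := by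
  have hprime : ∀ i ∈ range k, (p i).Prime := fun i hi => hp i (mem_range.mp hi)
  have hinj' : Set.InjOn p (range k) := fun i hi j hj =>
    hinj i (mem_range.mp hi) j (mem_range.mp hj)
  have hpair := pairwise_coprime_of_injOn_primes hprime hinj'
  have htel := muSqSum_telescope (e := fun m => d * ∏ i ∈ range m, p i) hhmul hp
    (fun i hi => add_one_eq_div_of_eq_div_one_sub (hgp _ (hp i hi)).1.ne'
      (hgp _ (hp i hi)).2.ne (hhp _ (hp i hi)))
    (fun m _ => by rw [prod_range_succ, mul_assoc])
    (fun m hm => coprime_mul_prod_range_mul_of_lt hpair hcop hcopa hm) ⌊z⌋₊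
  simp only [prod_range_zero, mul_one] at htel
  rw [rhoCoeff, rhoCoeff, sum_filter_mul_dvd_Pa_eq_muSqSum z hd hcopa.coprime_mul_right,
    sum_filter_mul_dvd_Pa_eq_muSqSum z (Nat.squarefree_mul_iff.mpr
      ⟨hcop, hd, squarefree_prod_of_injOn_primes hprime hinj'⟩) hcopa,
    htel, sum_Icc_one_eq_sum_range, moebius_mul_prod_of_injOn_primes hprime hinj' hcop,
    hhmul _ _ hcop, hgmul _ _ hcop, map_prod_of_pairwise_coprime hh1 hhmul _ _ hpair,
    map_prod_of_pairwise_coprime hg1 hgmul _ _ hpair, prod_div_distrib]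
  simp only [Nat.add_sub_cancel, Nat.floor_div_natCast, muSqSum, card_range]
  push_cast
  ring

/-- For distinct primes `p_1, …, p_k` (here `p 0, …, p (k-1)`) and squarefree `d` with
`(d, p_1⋯p_k) = 1` and `(d p_1⋯p_k, a) = 1`, writing `α_m = p_1⋯p_m`:
`ρ_{d p_1⋯p_k} = (-1)^k (ρ_d - (μ(d)h(d)/(H_a(z)g(d))) R)` with
`R = ∑_{m=1}^k (∏_{i=1}^{m-1} h(p_i)/g(p_i)) ∑_{z/(dα_m) < l ≤ z/(dα_{m-1}), (l,dα_m a)=1}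
μ(l)² h(l)`. -/
theorem rho_mul_primes (a : ℕ) (ha : 1 ≤ a) (z : ℝ) (hz : 2 ≤ z) (g h : ℕ → ℝ)
    (hg1 : g 1 = 1) (hgmul : ∀ m n : ℕ, Nat.Coprime m n → g (m * n) = g m * g n)
    (hgp : ∀ p : ℕ, p.Prime → 0 < g p ∧ g p < 1)
    (hh1 : h 1 = 1) (hhmul : ∀ m n : ℕ, Nat.Coprime m n → h (m * n) = h m * h n)
    (hhp : ∀ p : ℕ, p.Prime → h p = g p / (1 - g p))
    (k : ℕ) (hk : 1 ≤ k) (p : ℕ → ℕ) (hp : ∀ i < k, (p i).Prime)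
    (hinj : ∀ i < k, ∀ j < k, p i = p j → i = j)
    (d : ℕ) (hd : Squarefree d)
    (hcop : Nat.Coprime d (∏ i ∈ Finset.range k, p i))
    (hcopa : Nat.Coprime (d * ∏ i ∈ Finset.range k, p i) a) :
    rhoCoeff z a g h (d * ∏ i ∈ Finset.range k, p i) =
      (-1 : ℝ) ^ k *
        (rhoCoeff z a g h d -
          ((ArithmeticFunction.moebius d : ℝ) * h d / (Ha z a h * g d)) *
            ∑ m ∈ Finset.Icc 1 k,
              (∏ i ∈ Finset.range (m - 1), h (p i) / g (p i)) *
                ∑ l ∈ (Finset.Ioc ⌊z / ((d * ∏ i ∈ Finset.range m, p i : ℕ) : ℝ)⌋₊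
                      ⌊z / ((d * ∏ i ∈ Finset.range (m - 1), p i : ℕ) : ℝ)⌋₊).filter
                    (fun l => Nat.gcd l (d * (∏ i ∈ Finset.range m, p i) * a) = 1),
                  (ArithmeticFunction.moebius l : ℝ) ^ 2 * h l) :=
  rho_mul_primes_general a z g h hg1 hgmul hgp hh1 hhmul hhp k p hp hinj d hd hcop hcopa
end

section
/- For every integer d ≥ 1 and every complex s with Re s > 1, the series ∑_{n ≥ 1, gcd(n,d)=1} 1/(τ(n)·n^s) converges absolutely and equals the convergent product ∏_{p ∤ d, p prime} p^s·log(p^s/(p^s−1)), where log denotes the principal branch of the complex logarithm. -/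
/-!
Both sides are the Euler product of the multiplicative function `n ↦ 1 / (τ(n) n^s)` restricted
to `n` coprime to `d`, which is absolutely summable since `τ(n) ≥ 1`. The local factor at a prime
`p ∤ d` is `∑ₑ x^e / (e + 1)` with `x = p^{-s}`, `|x| < 1`, i.e. the logarithmic series
`-x⁻¹ log (1 - x) = p^s log (p^s / (p^s - 1))`; the factor at a prime `p ∣ d` is `1`.
-/

open Complex

lemma hasSum_one_div_succ_mul_pow {y : ℂ} (hy : 1 < ‖y‖) :
    HasSum (fun e : ℕ => 1 / (((e + 1 : ℕ) : ℂ) * y ^ e)) (y * log (y / (y - 1))) := by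
  have hy0 : y ≠ 0 := norm_pos_iff.mp (one_pos.trans hy)
  have hx : ‖y⁻¹‖ < 1 := by rwa [norm_inv, inv_lt_one₀ (one_pos.trans hy)]
  have hlog : log (y / (y - 1)) = -log (1 - y⁻¹) := by
    have harg : (1 - y⁻¹).arg ≠ Real.pi := by
      rw [sub_eq_add_neg]
      exact slitPlane_arg_ne_pi (mem_slitPlane_of_norm_lt_one (by rwa [norm_neg]))
    rw [← log_inv _ harg]
    congr 1
    field_simp
  rw [hlog]
  refine ((hasSum_taylorSeries_neg_log' hx).mul_left y).congr_fun fun e => ?_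
  push_cast
  rw [inv_pow]
  field_simp
  ring

lemma one_lt_norm_natCast_cpow {n : ℕ} (hn : 1 < n) {s : ℂ} (hs : 0 < s.re) :
    1 < ‖(n : ℂ) ^ s‖ := by
  rw [norm_natCast_cpow_of_pos (by omega)]
  exact Real.one_lt_rpow (by exact_mod_cast hn) hs

lemma Set.indicator_mul_of_mem_iff {M R : Type*} [Mul M] [MulZeroClass R] {S : Set M}
    {f : M → R} {m n : M} (hS : m * n ∈ S ↔ m ∈ S ∧ n ∈ S) (hf : f (m * n) = f m * f n) :
    S.indicator f (m * n) = S.indicator f m * S.indicator f n := by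
  by_cases hm : m ∈ S <;> by_cases hn : n ∈ S <;> simp [hS, hm, hn, hf]

def coprimeTo (d : ℕ) : Set ℕ := {k | 0 < k ∧ k.gcd d = 1}

lemma mem_coprimeTo {d k : ℕ} : k ∈ coprimeTo d ↔ 0 < k ∧ k.Coprime d :=
  Iff.rfl

lemma mul_mem_coprimeTo_iff {d m n : ℕ} :
    m * n ∈ coprimeTo d ↔ m ∈ coprimeTo d ∧ n ∈ coprimeTo d := by
  simp only [mem_coprimeTo, CanonicallyOrderedAdd.mul_pos, Nat.coprime_mul_iff_left]
  tauto

lemma prime_pow_mem_coprimeTo_iff {d p e : ℕ} (hp : p.Prime) :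
    p ^ e ∈ coprimeTo d ↔ e = 0 ∨ ¬p ∣ d := by
  rcases e.eq_zero_or_pos with rfl | he
  · simp [mem_coprimeTo]
  · simp [mem_coprimeTo, hp.pos, Nat.coprime_pow_left_iff he, hp.coprime_iff_not_dvd, he.ne']

lemma tsum_indicator_coprimeTo_prime_pow_of_dvd {R : Type*} [AddCommMonoid R] [TopologicalSpace R]
    (f : ℕ → R) {d p : ℕ} (hp : p.Prime) (hpd : p ∣ d) :
    ∑' e, (coprimeTo d).indicator f (p ^ e) = f 1 := by
  rw [tsum_eq_single 0 fun e he =>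
    Set.indicator_of_notMem (by simp [prime_pow_mem_coprimeTo_iff hp, he, hpd]) f]
  simp [mem_coprimeTo]

noncomputable def invTauCpow (s : ℂ) (n : ℕ) : ℂ := 1 / ((n.divisors.card : ℂ) * (n : ℂ) ^ s)

lemma invTauCpow_zero (s : ℂ) : invTauCpow s 0 = 0 := by simp [invTauCpow]

lemma invTauCpow_one (s : ℂ) : invTauCpow s 1 = 1 := by simp [invTauCpow]

lemma invTauCpow_mul {m n : ℕ} (h : m.Coprime n) (s : ℂ) :
    invTauCpow s (m * n) = invTauCpow s m * invTauCpow s n := by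
  rw [invTauCpow, h.card_divisors_mul, Nat.cast_mul, Nat.cast_mul, natCast_mul_natCast_cpow,
    mul_mul_mul_comm, ← one_div_mul_one_div]
  rfl

lemma invTauCpow_prime_pow {p : ℕ} (hp : p.Prime) (s : ℂ) (e : ℕ) :
    invTauCpow s (p ^ e) = 1 / (((e + 1 : ℕ) : ℂ) * ((p : ℂ) ^ s) ^ e) := by
  rw [invTauCpow, Nat.divisors_prime_pow hp, Finset.card_map, Finset.card_range, Nat.cast_pow,
    ← natCast_cpow_natCast_mul, cpow_nat_mul]

lemma norm_invTauCpow_le (s : ℂ) (n : ℕ) : ‖invTauCpow s n‖ ≤ ‖1 / (n : ℂ) ^ s‖ := by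
  rcases n.eq_zero_or_pos with rfl | hn
  · simp [invTauCpow_zero]
  have hτ : (1 : ℝ) ≤ ‖(n.divisors.card : ℂ)‖ := by
    rw [norm_natCast]
    exact_mod_cast Finset.card_pos.mpr ⟨1, Nat.one_mem_divisors.mpr hn.ne'⟩
  rw [invTauCpow, norm_div, norm_div, norm_mul, norm_one]
  gcongr
  · exact norm_natCast_cpow_pos_of_pos hn s
  · exact le_mul_of_one_le_left (norm_nonneg _) hτ

lemma summable_norm_invTauCpow {s : ℂ} (hs : 1 < s.re) : Summable (‖invTauCpow s ·‖) :=
  (summable_norm_iff.mpr (summable_one_div_nat_cpow.mpr hs)).of_nonneg_of_le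
    (fun _ => norm_nonneg _) (norm_invTauCpow_le s)

lemma tsum_invTauCpow_prime_pow {p : ℕ} (hp : p.Prime) {s : ℂ} (hs : 1 < s.re) :
    ∑' e, invTauCpow s (p ^ e) = (p : ℂ) ^ s * log ((p : ℂ) ^ s / ((p : ℂ) ^ s - 1)) := by
  simp only [invTauCpow_prime_pow hp]
  exact (hasSum_one_div_succ_mul_pow (one_lt_norm_natCast_cpow hp.one_lt (by linarith))).tsum_eq

lemma mulIndicator_eulerFactor_invTauCpow {d : ℕ} {s : ℂ} (hs : 1 < s.re) :
    {p : ℕ | p.Prime}.mulIndicator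
        (fun p => ∑' e, (coprimeTo d).indicator (invTauCpow s) (p ^ e)) =
      {p : ℕ | p.Prime ∧ ¬p ∣ d}.mulIndicator
        (fun p => (p : ℂ) ^ s * log ((p : ℂ) ^ s / ((p : ℂ) ^ s - 1))) := by
  ext p
  by_cases hp : p.Prime
  · by_cases hpd : p ∣ d
    · simp [hp, hpd, tsum_indicator_coprimeTo_prime_pow_of_dvd _ hp hpd, invTauCpow_one]
    · have hmem (e : ℕ) : p ^ e ∈ coprimeTo d :=
        (prime_pow_mem_coprimeTo_iff hp).mpr (Or.inr hpd)
      simp [hp, hpd, Set.indicator_of_mem (hmem _), tsum_invTauCpow_prime_pow hp hs]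
  · simp [hp]

theorem euler_product_inv_tau_general (d : ℕ) (s : ℂ) (hs : 1 < s.re) :
    Summable (fun n : {n : ℕ // 0 < n ∧ Nat.gcd n d = 1} =>
      ‖(1 : ℂ) / (((n : ℕ).divisors.card : ℂ) * ((n : ℕ) : ℂ) ^ s)‖) ∧
    Multipliable (fun p : {p : ℕ // p.Prime ∧ ¬p ∣ d} =>
      ((p : ℕ) : ℂ) ^ s * Complex.log (((p : ℕ) : ℂ) ^ s / (((p : ℕ) : ℂ) ^ s - 1))) ∧
    ∑' n : {n : ℕ // 0 < n ∧ Nat.gcd n d = 1},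
        (1 : ℂ) / (((n : ℕ).divisors.card : ℂ) * ((n : ℕ) : ℂ) ^ s) =
      ∏' p : {p : ℕ // p.Prime ∧ ¬p ∣ d},
        ((p : ℕ) : ℂ) ^ s * Complex.log (((p : ℕ) : ℂ) ^ s / (((p : ℕ) : ℂ) ^ s - 1)) := by
  have hsum : Summable ((coprimeTo d).indicator (‖invTauCpow s ·‖)) :=
    (summable_norm_invTauCpow hs).indicator _
  have hprod := EulerProduct.eulerProduct_hasProd_mulIndicator
    (f := (coprimeTo d).indicator (invTauCpow s))
    (by simp [mem_coprimeTo, invTauCpow_one])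
    (fun h => Set.indicator_mul_of_mem_iff mul_mem_coprimeTo_iff (invTauCpow_mul h s))
    (by simpa only [norm_indicator_eq_indicator_norm] using hsum)
    (by simp [invTauCpow_zero])
  rw [mulIndicator_eulerFactor_invTauCpow hs, ← hasProd_subtype_iff_mulIndicator] at hprod
  refine ⟨summable_subtype_iff_indicator.mpr hsum, hprod.multipliable, ?_⟩
  exact (tsum_subtype (coprimeTo d) (invTauCpow s)).trans hprod.tprod_eq.symm

/-- For `d ≥ 1` and `Re s > 1`, the series `∑_{n ≥ 1, (n,d)=1} 1/(τ(n) n^s)` converges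
absolutely and equals the convergent product `∏_{p ∤ d} p^s log(p^s/(p^s-1))` over primes
not dividing `d` (principal branch of the complex logarithm). -/
theorem euler_product_inv_tau (d : ℕ) (hd : 1 ≤ d) (s : ℂ) (hs : 1 < s.re) :
    Summable (fun n : {n : ℕ // 0 < n ∧ Nat.gcd n d = 1} =>
      ‖(1 : ℂ) / (((n : ℕ).divisors.card : ℂ) * ((n : ℕ) : ℂ) ^ s)‖) ∧
    Multipliable (fun p : {p : ℕ // p.Prime ∧ ¬p ∣ d} =>
      ((p : ℕ) : ℂ) ^ s * Complex.log (((p : ℕ) : ℂ) ^ s / (((p : ℕ) : ℂ) ^ s - 1))) ∧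
    ∑' n : {n : ℕ // 0 < n ∧ Nat.gcd n d = 1},
        (1 : ℂ) / (((n : ℕ).divisors.card : ℂ) * ((n : ℕ) : ℂ) ^ s) =
      ∏' p : {p : ℕ // p.Prime ∧ ¬p ∣ d},
        ((p : ℕ) : ℂ) ^ s * Complex.log (((p : ℕ) : ℂ) ^ s / (((p : ℕ) : ℂ) ^ s - 1)) :=
  euler_product_inv_tau_general d s hs
end
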